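/- arXiv:math/0403378 — 5 statements merged into one kernel-verified Lean document; each statement's English description precedes it below -/
import Mathlib

section
/- Let C1, ..., Ct be conjugacy classes in the symmetric group S_m. The set {C1, ..., Ct} is strictly transitive (i.e., for every choice of representatives τi ∈ Ci, the subgroup generated by {τ1, ..., τt} acts transitively on {1,...,m}) if and only if for some (equivalently, any) fixed set of representatives σ1, ..., σt with σi ∈ Ci, the following holds: for every i with 1 ≤ i ≤ m−1, there exists some σj that leaves no subset of {1,...,m} of cardinality i invariant. -/
open Pointwise

/-- A family of conjugacy classes in the symmetric group on `Fin m`, given by a family of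
representatives `σ i`, is *strictly transitive* if for every choice of representatives
`τ i` conjugate to `σ i`, the subgroup generated by the `τ i` acts transitively. -/
def StrictlyTransitive {m t : ℕ} (σ : Fin t → Equiv.Perm (Fin m)) : Prop :=
  ∀ τ : Fin t → Equiv.Perm (Fin m), (∀ i, IsConj (σ i) (τ i)) →
    ∀ x y : Fin m, ∃ g ∈ Subgroup.closure (Set.range τ), g x = y

lemma image_eq_smul_finset {m : ℕ} (g : Equiv.Perm (Fin m)) (S : Finset (Fin m)) :
    S.image g = g • S := by
  ext z; simp [Finset.mem_smul_finset, Equiv.Perm.smul_def]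

lemma exists_perm_smul_eq {m : ℕ} {S T : Finset (Fin m)} (h : S.card = T.card) :
    ∃ g : Equiv.Perm (Fin m), g • S = T := by
  classical
  have hc : Sᶜ.card = Tᶜ.card := by simp [Finset.card_compl, h]
  let e1 : {x // x ∈ S} ≃ {x // x ∈ T} := Finset.equivOfCardEq h
  let e2 : {x // ¬ x ∈ S} ≃ {x // ¬ x ∈ T} :=
    ((Equiv.subtypeEquivRight (fun x => by simp)).trans (Finset.equivOfCardEq hc)).trans
      (Equiv.subtypeEquivRight (fun x => by simp))
  refine ⟨Equiv.subtypeCongr e1 e2, ?_⟩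
  apply Finset.eq_of_subset_of_card_le
  · intro z hz
    rw [Finset.mem_smul_finset] at hz
    obtain ⟨w, hw, rfl⟩ := hz
    have : Equiv.subtypeCongr e1 e2 w = (e1 ⟨w, hw⟩ : Fin m) := by
      simp [Equiv.subtypeCongr, hw]
    rw [Equiv.Perm.smul_def, this]
    exact (e1 ⟨w, hw⟩).2
  · rw [Finset.card_smul_finset, h]

/-- The set of conjugacy classes of `σ 1, …, σ t` in `S_m` is strictly transitive if and only
if for every `1 ≤ i ≤ m - 1` there is some `σ j` leaving no subset of cardinality `i`
invariant. -/
theorem strictlyTransitive_iff {m t : ℕ} (hm : 1 ≤ m) (σ : Fin t → Equiv.Perm (Fin m)) :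
    StrictlyTransitive σ ↔
      ∀ i : ℕ, 1 ≤ i → i ≤ m - 1 →
        ∃ j : Fin t, ∀ S : Finset (Fin m), S.card = i → S.image (σ j) ≠ S := by
  classical
  constructor
  · intro hst i hi1 hi2
    by_contra hcon
    push_neg at hcon
    choose S hScard hSinv using hcon
    have him : i < m := by omega
    obtain ⟨T, -, hTcard⟩ := Finset.exists_subset_card_eq
      (show i ≤ (Finset.univ : Finset (Fin m)).card by simpa using him.le)
    choose g hg using fun j => exists_perm_smul_eq (show (S j).card = T.card by
      rw [hScard j, hTcard])
    set τ : Fin t → Equiv.Perm (Fin m) := fun j => g j * σ j * (g j)⁻¹ with hτdef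
    have hconj : ∀ j, IsConj (σ j) (τ j) := fun j => isConj_iff.mpr ⟨g j, rfl⟩
    have hτinv : ∀ j, τ j • T = T := by
      intro j
      have h1 : (g j)⁻¹ • T = S j := by rw [← hg j, inv_smul_smul]
      have h2 : σ j • S j = S j := by rw [← image_eq_smul_finset]; exact hSinv j
      calc τ j • T = g j • σ j • (g j)⁻¹ • T := by
            simp [hτdef, mul_smul]
        _ = T := by rw [h1, h2, hg j]
    obtain ⟨x, hx⟩ : ∃ x, x ∈ T := Finset.card_pos.mp (by omega)
    obtain ⟨y, hy⟩ : ∃ y, y ∉ T := by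
      by_contra hall
      push_neg at hall
      have : T = Finset.univ := Finset.eq_univ_iff_forall.mpr hall
      rw [this] at hTcard
      simp at hTcard
      omega
    obtain ⟨h, hmem, hxy⟩ := hst τ hconj x y
    have hstab : h ∈ MulAction.stabilizer (Equiv.Perm (Fin m)) T := by
      refine Subgroup.closure_le _ |>.mpr ?_ hmem
      rintro - ⟨j, rfl⟩
      exact hτinv j
    have : h x ∈ T := by
      rw [← (MulAction.mem_stabilizer_iff.mp hstab)]
      exact Finset.smul_mem_smul_finset hx
    rw [hxy] at this
    exact hy this
  · intro h τ hconj x y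
    set G := Subgroup.closure (Set.range τ) with hG
    set S : Finset (Fin m) := Finset.univ.filter (fun z => ∃ g ∈ G, g x = z) with hS
    have hx : x ∈ S := by
      simp only [hS, Finset.mem_filter, Finset.mem_univ, true_and]
      exact ⟨1, G.one_mem, rfl⟩
    by_contra hy
    push_neg at hy
    have hyS : y ∉ S := by
      simp only [hS, Finset.mem_filter, Finset.mem_univ, true_and]
      rintro ⟨g, hg, rfl⟩
      exact hy g hg rfl
    have hGinv : ∀ g ∈ G, g • S = S := by
      intro g hg
      apply Finset.eq_of_subset_of_card_le
      · intro z hz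
        rw [Finset.mem_smul_finset] at hz
        obtain ⟨w, hw, rfl⟩ := hz
        simp only [hS, Finset.mem_filter, Finset.mem_univ, true_and] at hw ⊢
        obtain ⟨k, hk, rfl⟩ := hw
        exact ⟨g * k, G.mul_mem hg hk, rfl⟩
      · rw [Finset.card_smul_finset]
    have hcard1 : 1 ≤ S.card := Finset.card_pos.mpr ⟨x, hx⟩
    have hcardm : S.card ≤ m - 1 := by
      have hne : S ≠ Finset.univ := fun hSu => hyS (hSu ▸ Finset.mem_univ y)
      have : S.card < m := by
        have := Finset.card_lt_card (Finset.ssubset_univ_iff.mpr hne)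
        simpa using this
      omega
    obtain ⟨j, hj⟩ := h S.card hcard1 hcardm
    obtain ⟨c, hc⟩ := isConj_iff.mp (hconj j)
    have hτG : τ j ∈ G := Subgroup.subset_closure ⟨j, rfl⟩
    have hτS : τ j • S = S := hGinv _ hτG
    apply hj (c⁻¹ • S) (by rw [Finset.card_smul_finset])
    rw [image_eq_smul_finset]
    calc σ j • c⁻¹ • S = c⁻¹ • (c * σ j * c⁻¹) • S := by
          simp [mul_smul]
      _ = c⁻¹ • S := by rw [hc, hτS]
end

section
/- In S_6, the pair of conjugacy classes of the permutations (1 2 3)(4 5 6) and (1 2 3 4)(5 6) is strictly transitive: for any σ conjugate to (1 2 3)(4 5 6) and any τ conjugate to (1 2 3 4)(5 6), the subgroup of S_6 generated by σ and τ acts transitively on {1,...,6}. -/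
/-!
Let `K = ⟨σ, τ⟩`. The point `x` on the 4-cycle of `τ` has a `K`-orbit of at least 4 points.
If some `y` lay outside it, the `K`-orbit of `y` would be disjoint from that of `x` and would
contain the whole `σ`-cycle of `y`, which has 3 points since `σ` is a product of two disjoint
3-cycles; but `4 + 3 > 6`.
-/

open Equiv MulAction

namespace MulAction

variable {G α : Type*} [Group G] [MulAction G α]

lemma period_conj (c g : G) (a : α) : period (c * g * c⁻¹) a = period g (c⁻¹ • a) := by
  rw [period_eq_minimalPeriod, period_eq_minimalPeriod,
    Function.minimalPeriod_eq_minimalPeriod_iff]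
  intro n
  rw [isPeriodicPt_smul_iff, isPeriodicPt_smul_iff, conj_pow, mul_smul, mul_smul,
    smul_eq_iff_eq_inv_smul, eq_comm]

lemma period_le_ncard_orbit [Finite α] {K : Subgroup G} {g : G} (hg : g ∈ K) (a : α) :
    period g a ≤ (orbit K a).ncard := by
  have : Fintype (orbit (Subgroup.zpowers g) a) := Fintype.ofFinite _
  rw [period_eq_minimalPeriod, minimalPeriod_eq_card, ← Nat.card_eq_fintype_card,
    Nat.card_coe_set_eq]
  refine Set.ncard_le_ncard ?_
  rintro _ ⟨⟨k, hk⟩, rfl⟩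
  exact ⟨⟨k, Subgroup.zpowers_le.mpr hg hk⟩, rfl⟩

lemma isPretransitive_of_lt_period_add_period [Finite α] {K : Subgroup G} {g h : G}
    (hg : g ∈ K) (hh : h ∈ K) (a : α) (hgh : ∀ b : α, Nat.card α < period g a + period h b) :
    IsPretransitive K α := by
  refine (isPretransitive_iff_orbit_eq_univ a).mpr (Set.eq_univ_of_forall fun b ↦ ?_)
  by_contra hb
  have hdisj : Disjoint (orbit K a) (orbit K b) :=
    (orbit.eq_or_disjoint a b).resolve_left fun hab ↦ hb (hab ▸ mem_orbit_self b)
  have hcard := Set.ncard_union_eq hdisj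
  have hle := Set.ncard_le_card (orbit K a ∪ orbit K b)
  linarith [period_le_ncard_orbit hg a, period_le_ncard_orbit hh b, hgh b]

end MulAction

lemma period_prod_two_three_cycles (b : Fin 6) :
    period ((swap (0 : Fin 6) 1 * swap 1 2) * (swap (3 : Fin 6) 4 * swap 4 5)) b = 3 := by
  have : Fact (Nat.Prime 3) := ⟨Nat.prime_three⟩
  exact Function.minimalPeriod_eq_prime (isPeriodicPt_smul_iff.mpr (by revert b; decide))
    (by revert b; decide)

lemma period_prod_four_cycle_swap_zero :
    period ((swap (0 : Fin 6) 1 * swap 1 2 * swap 2 3) * swap (4 : Fin 6) 5) (0 : Fin 6) = 4 := by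
  have : Fact (Nat.Prime 2) := ⟨Nat.prime_two⟩
  rw [period_eq_minimalPeriod, show 4 = 2 ^ (1 + 1) from rfl]
  exact Function.minimalPeriod_eq_prime_pow (isPeriodicPt_smul_iff.not.mpr (by decide))
    (isPeriodicPt_smul_iff.mpr (by decide))

/-- In `S_6`, the pair of conjugacy classes of `(1 2 3)(4 5 6)` (two disjoint 3-cycles)
and `(1 2 3 4)(5 6)` (a disjoint 4-cycle and 2-cycle) is strictly transitive: for any
`σ` conjugate to the first and `τ` conjugate to the second, the subgroup generated by
`σ` and `τ` acts transitively on the six points. -/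
theorem strictly_transitive_33_42 (σ τ : Equiv.Perm (Fin 6))
    (hσ : IsConj ((Equiv.swap (0 : Fin 6) 1 * Equiv.swap 1 2) *
        (Equiv.swap (3 : Fin 6) 4 * Equiv.swap 4 5)) σ)
    (hτ : IsConj ((Equiv.swap (0 : Fin 6) 1 * Equiv.swap 1 2 * Equiv.swap 2 3) *
        Equiv.swap (4 : Fin 6) 5) τ) :
    ∀ x y : Fin 6, ∃ g ∈ Subgroup.closure ({σ, τ} : Set (Equiv.Perm (Fin 6))), g x = y := by
  obtain ⟨c, rfl⟩ := isConj_iff.mp hσ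
  obtain ⟨d, rfl⟩ := isConj_iff.mp hτ
  set K := Subgroup.closure ({c * _ * c⁻¹, d * _ * d⁻¹} : Set (Perm (Fin 6)))
  have : IsPretransitive K (Fin 6) :=
    isPretransitive_of_lt_period_add_period (Subgroup.subset_closure (.inr rfl))
      (Subgroup.subset_closure (.inl rfl)) (d • (0 : Fin 6)) fun b ↦ by
        rw [period_conj, period_conj, inv_smul_smul, period_prod_four_cycle_swap_zero,
          period_prod_two_three_cycles, Nat.card_fin]
        norm_num
  intro x y
  obtain ⟨⟨g, hg⟩, hgxy⟩ := exists_smul_eq K x y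
  exact ⟨g, hg, hgxy⟩
end

section
/- Let E/F be a finite Galois extension with cyclic Galois group H, and let ρ : H → (E^×)^r be a homomorphism into a power of the multiplicative group of an algebraically closed subfield C ⊆ F, landing in (C^×)^r. Then there exists η ∈ (E^×)^r such that τ(η) = η · ρ(τ) for all τ ∈ H, where τ acts coordinatewise on (E^×)^r. -/
open groupCohomology

theorem MonoidHom.isMulCocycle₁_of_forall_smul_eq {G M : Type*} [Group G] [CommGroup M]
    [MulDistribMulAction G M] (χ : G →* M) (hχ : ∀ g h : G, g • χ h = χ h) :
    IsMulCocycle₁ χ := fun g h => by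
  rw [hχ, map_mul, mul_comm]

theorem exists_units_apply_eq_mul_of_forall_apply_eq {K L : Type*} [Field K] [Field L]
    [Algebra K L] [FiniteDimensional K L] (χ : (L ≃ₐ[K] L) →* Lˣ)
    (hχ : ∀ σ τ : L ≃ₐ[K] L, σ (χ τ : L) = χ τ) :
    ∃ β : Lˣ, ∀ τ : L ≃ₐ[K] L, τ (β : L) = β * χ τ := by
  have hcocycle : IsMulCocycle₁ χ :=
    χ.isMulCocycle₁_of_forall_smul_eq fun σ τ => Units.ext <| hχ σ τ
  obtain ⟨β, hβ⟩ := isMulCoboundary₁_of_isMulCocycle₁_of_aut_to_units χ hcocycle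
  refine ⟨β, fun τ => ?_⟩
  rw [← (hβ τ), AlgEquiv.smul_units_def, Units.val_div_eq_div_val, mul_div_cancel₀ _ β.ne_zero]
  rfl

theorem hilbert90_torus_general {C F E : Type*} [Field C] [Field F] [Field E]
    [Algebra C F] [Algebra C E] [Algebra F E] [IsScalarTower C F E]
    [FiniteDimensional F E]
    (r : ℕ) (ρ : (E ≃ₐ[F] E) →* (Fin r → Eˣ))
    (hρ : ∀ τ i, ((ρ τ i : E)) ∈ (algebraMap C E).range) :
    ∃ η : Fin r → Eˣ, ∀ τ : E ≃ₐ[F] E, ∀ i,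
      τ ((η i : E)) = (η i : E) * (ρ τ i : E) := by
  have hfixed (σ τ : E ≃ₐ[F] E) (i : Fin r) : σ (ρ τ i : E) = ρ τ i := by
    obtain ⟨c, hc⟩ := hρ τ i
    rw [← hc, IsScalarTower.algebraMap_apply C F E, σ.commutes]
  choose η hη using fun i =>
    exists_units_apply_eq_mul_of_forall_apply_eq ((Pi.evalMonoidHom _ i).comp ρ) (hfixed · · i)
  exact ⟨η, fun τ i => hη i τ⟩

/-- Let `E/F` be a finite Galois extension with cyclic Galois group `H`, `C ⊆ F` an
algebraically closed subfield, and `ρ : H → (Eˣ)^r` a homomorphism whose values lie in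
`(C^×)^r`.  Then there is `η ∈ (Eˣ)^r` with `τ(η) = η · ρ(τ)` for all `τ ∈ H`
(coordinatewise). -/
theorem hilbert90_torus {C F E : Type*} [Field C] [IsAlgClosed C] [Field F] [Field E]
    [Algebra C F] [Algebra C E] [Algebra F E] [IsScalarTower C F E]
    [FiniteDimensional F E] [IsGalois F E] [IsCyclic (E ≃ₐ[F] E)]
    (r : ℕ) (ρ : (E ≃ₐ[F] E) →* (Fin r → Eˣ))
    (hρ : ∀ τ i, ((ρ τ i : E)) ∈ (algebraMap C E).range) :
    ∃ η : Fin r → Eˣ, ∀ τ : E ≃ₐ[F] E, ∀ i,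
      τ ((η i : E)) = (η i : E) * (ρ τ i : E) :=
  hilbert90_torus_general r ρ hρ
end

section
/- In S_{2ℓ} (ℓ ≥ 3), let σ_1 be a permutation of cycle type consisting of two disjoint ℓ-cycles (1,...,ℓ)(ℓ+1,...,2ℓ) and σ_2 a permutation of cycle type consisting of a (2ℓ−2)-cycle and a 2-cycle, namely (1,...,ℓ−1,ℓ+1,...,2ℓ−1)(ℓ,2ℓ). Then the pair of conjugacy classes {class(σ_1), class(σ_2)} is strictly transitive: any choice of representatives generates a transitive subgroup of S_{2ℓ}. -/
open Equiv Equiv.Perm Finset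

private lemma my_cycle_subset {n : ℕ} (τ : Perm (Fin n)) (S : Finset (Fin n))
    (hinv : ∀ k : ℤ, ∀ a ∈ S, (τ ^ k) a ∈ S)
    {c : Perm (Fin n)} (hc : c ∈ τ.cycleFactorsFinset)
    {a : Fin n} (haS : a ∈ S) (hac : a ∈ c.support) :
    c.support ⊆ S := by
  intro b hb
  have hcc : c = τ.cycleOf a := cycle_is_cycleOf hac hc
  have hsc : τ.SameCycle a b := by
    rw [hcc] at hb
    exact (mem_support_cycleOf_iff.mp hb).1
  obtain ⟨k, hk⟩ := hsc
  exact hk ▸ hinv k a haS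

private lemma my_card_invariant {n : ℕ} (τ : Perm (Fin n)) (S : Finset (Fin n))
    (hinv : ∀ k : ℤ, ∀ a ∈ S, (τ ^ k) a ∈ S)
    {u v : ℕ} (hct : τ.cycleType = {u, v}) (hn : u + v = n) :
    S.card = 0 ∨ S.card = u ∨ S.card = v ∨ S.card = u + v := by
  classical
  have hsum : τ.support.card = u + v := by
    rw [← sum_cycleType, hct]; simp
  have hsupp : τ.support = Finset.univ := by
    apply Finset.eq_univ_of_card
    rw [hsum, hn, Fintype.card_fin]
  -- factors has two elements
  have hmap : τ.cycleFactorsFinset.val.map (Finset.card ∘ support) = {u, v} := by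
    rw [← cycleType_def, hct]
  have hcard2 : τ.cycleFactorsFinset.card = 2 := by
    have h := congrArg Multiset.card hmap
    rw [Multiset.card_map] at h
    exact h
  obtain ⟨c, d, hcd, hfac⟩ := Finset.card_eq_two.mp hcard2
  have hcards : ({c.support.card, d.support.card} : Multiset ℕ) = {u, v} := by
    have : τ.cycleFactorsFinset.val = {c, d} := by
      rw [hfac]; simp [Finset.insert_val, Multiset.ndinsert_of_notMem, hcd]
    rw [this] at hmap
    simpa using hmap
  have hdisj : _root_.Disjoint c.support d.support := by
    have := τ.cycleFactorsFinset_pairwise_disjoint (by rw [hfac]; simp) (by rw [hfac]; simp) hcd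
    exact Equiv.Perm.disjoint_iff_disjoint_support.mp this
  have hcmem : c ∈ τ.cycleFactorsFinset := by rw [hfac]; simp
  have hdmem : d ∈ τ.cycleFactorsFinset := by rw [hfac]; simp
  -- every element of S is in c.support or d.support
  have hcover : ∀ a ∈ S, a ∈ c.support ∪ d.support := by
    intro a _
    have ha : a ∈ τ.support := hsupp ▸ Finset.mem_univ a
    have h1 : τ.cycleOf a ∈ τ.cycleFactorsFinset := cycleOf_mem_cycleFactorsFinset_iff.mpr ha
    have h2 : a ∈ (τ.cycleOf a).support :=
      mem_support_cycleOf_iff.mpr ⟨Equiv.Perm.SameCycle.refl _ _, ha⟩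
    rw [hfac, Finset.mem_insert, Finset.mem_singleton] at h1
    rcases h1 with h1 | h1 <;> rw [h1] at h2 <;> simp [Finset.mem_union, h2]
  -- case analysis
  by_cases hSc : (S ∩ c.support).Nonempty
  · obtain ⟨a, ha⟩ := hSc
    rw [Finset.mem_inter] at ha
    have hcS : c.support ⊆ S := my_cycle_subset τ S hinv hcmem ha.1 ha.2
    by_cases hSd : (S ∩ d.support).Nonempty
    · obtain ⟨b, hb⟩ := hSd
      rw [Finset.mem_inter] at hb
      have hdS : d.support ⊆ S := my_cycle_subset τ S hinv hdmem hb.1 hb.2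
      have hSeq : S = c.support ∪ d.support := by
        apply Finset.Subset.antisymm hcover
        exact Finset.union_subset hcS hdS
      right; right; right
      rw [hSeq, Finset.card_union_of_disjoint hdisj]
      have : c.support.card + d.support.card = u + v := by
        have := congrArg Multiset.sum hcards
        simpa using this
      exact this
    · have hSeq : S = c.support := by
        apply Finset.Subset.antisymm _ hcS
        intro a ha
        rcases Finset.mem_union.mp (hcover a ha) with h | h
        · exact h
        · exact absurd ⟨a, Finset.mem_inter.mpr ⟨ha, h⟩⟩ hSd
      have : c.support.card = u ∨ c.support.card = v := by
        have : c.support.card ∈ ({u, v} : Multiset ℕ) := by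
          rw [← hcards]; simp
        simpa using this
      rcases this with h | h
      · right; left; rw [hSeq, h]
      · right; right; left; rw [hSeq, h]
  · by_cases hSd : (S ∩ d.support).Nonempty
    · obtain ⟨b, hb⟩ := hSd
      rw [Finset.mem_inter] at hb
      have hdS : d.support ⊆ S := my_cycle_subset τ S hinv hdmem hb.1 hb.2
      have hSeq : S = d.support := by
        apply Finset.Subset.antisymm _ hdS
        intro a ha
        rcases Finset.mem_union.mp (hcover a ha) with h | h
        · exact absurd ⟨a, Finset.mem_inter.mpr ⟨ha, h⟩⟩ hSc
        · exact h
      have : d.support.card = u ∨ d.support.card = v := by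
        have : d.support.card ∈ ({u, v} : Multiset ℕ) := by
          rw [← hcards]; simp
        simpa using this
      rcases this with h | h
      · right; left; rw [hSeq, h]
      · right; right; left; rw [hSeq, h]
    · left
      rw [Finset.card_eq_zero]
      by_contra hne
      obtain ⟨a, ha⟩ := Finset.nonempty_iff_ne_empty.mpr hne
      rcases Finset.mem_union.mp (hcover a ha) with h | h
      · exact hSc ⟨a, Finset.mem_inter.mpr ⟨ha, h⟩⟩
      · exact hSd ⟨a, Finset.mem_inter.mpr ⟨ha, h⟩⟩


/-- In `S_{2ℓ}` with `ℓ ≥ 3`, let `σ₁` have cycle type two disjoint `ℓ`-cycles and `σ₂`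
have cycle type a `(2ℓ-2)`-cycle together with a `2`-cycle.  Then the pair of their
conjugacy classes is strictly transitive: any representatives `τ₁, τ₂` of the two
classes generate a transitive subgroup of `S_{2ℓ}`. -/
theorem strictly_transitive_ll_and_2lm2_2 (ℓ : ℕ) (hℓ : 3 ≤ ℓ)
    (σ₁ σ₂ : Equiv.Perm (Fin (2 * ℓ)))
    (h1 : σ₁.cycleType = {ℓ, ℓ})
    (h2 : σ₂.cycleType = {2 * ℓ - 2, 2})
    (τ₁ τ₂ : Equiv.Perm (Fin (2 * ℓ)))
    (hc1 : IsConj σ₁ τ₁) (hc2 : IsConj σ₂ τ₂) :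
    ∀ x y : Fin (2 * ℓ),
      ∃ g ∈ Subgroup.closure ({τ₁, τ₂} : Set (Equiv.Perm (Fin (2 * ℓ)))), g x = y := by
  classical
  intro x y
  set H := Subgroup.closure ({τ₁, τ₂} : Set (Equiv.Perm (Fin (2 * ℓ)))) with hH
  have ht1 : τ₁ ∈ H := Subgroup.subset_closure (by simp)
  have ht2 : τ₂ ∈ H := Subgroup.subset_closure (by simp)
  set S : Finset (Fin (2 * ℓ)) :=
    Finset.univ.filter (fun z => ∃ g ∈ H, g x = z) with hS
  have hmemS : ∀ z, z ∈ S ↔ ∃ g ∈ H, g x = z := by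
    intro z; rw [hS, Finset.mem_filter]; simp
  have hxS : x ∈ S := (hmemS x).mpr ⟨1, H.one_mem, rfl⟩
  have hinv : ∀ τ : Equiv.Perm (Fin (2 * ℓ)), τ ∈ H →
      ∀ k : ℤ, ∀ a ∈ S, (τ ^ k) a ∈ S := by
    intro τ hτ k a ha
    obtain ⟨g, hg, hgx⟩ := (hmemS a).mp ha
    refine (hmemS _).mpr ⟨(τ ^ k) * g, H.mul_mem (H.zpow_mem hτ k) hg, ?_⟩
    simp [Equiv.Perm.mul_apply, hgx]
  have hcyc1 : τ₁.cycleType = {ℓ, ℓ} :=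
    (Equiv.Perm.isConj_iff_cycleType_eq.mp hc1).symm.trans h1
  have hcyc2 : τ₂.cycleType = {2 * ℓ - 2, 2} :=
    (Equiv.Perm.isConj_iff_cycleType_eq.mp hc2).symm.trans h2
  have key1 := my_card_invariant τ₁ S (hinv τ₁ ht1) hcyc1 (by omega)
  have key2 := my_card_invariant τ₂ S (hinv τ₂ ht2) hcyc2 (by omega)
  have hpos : 0 < S.card := Finset.card_pos.mpr ⟨x, hxS⟩
  have hcard : S.card = 2 * ℓ := by omega
  have hSuniv : S = Finset.univ := by
    apply Finset.eq_univ_of_card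
    rw [hcard, Fintype.card_fin]
  have : y ∈ S := hSuniv ▸ Finset.mem_univ y
  exact (hmemS y).mp this
end

section
/- Let n ≥ 1 and suppose c ∈ C[z] is a polynomial of degree at most 3n−1 and w = (p, q) with p, q ∈ C[z] is a nonzero polynomial vector satisfying the differential system p' − n(z^{3n−1} − c)p = n z^{n−2} q and q' + n(z^{3n−1} + c)q = n z^n p, where additionally the leading behavior forces p monic of some degree m and deg q ≤ m − 1. Then comparing degrees yields a contradiction, so the only polynomial solution is w = 0 (equivalently p = q = 0). -/
open Polynomial

/-- Let `n ≥ 1` and let `c ∈ ℂ[z]` have degree at most `3n - 1`.  If polynomials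
`p, q ∈ ℂ[z]` satisfy the system
`p' − n(z^{3n−1} − c)p = n z^{n−2} q` and `q' + n(z^{3n−1} + c)q = n zⁿ p`
(coming from `w' − n[z^{n−2}e + zⁿf + z^{3n−1}h − cI]w = 0` for `w = p·u + q·v`), then
comparing degrees forces `w = 0`, i.e. `p = q = 0`: the system has no nonzero polynomial
solutions. -/
theorem no_nonzero_polynomial_solutions (n : ℕ) (hn : 1 ≤ n) (c p q : Polynomial ℂ)
    (hc : c.degree ≤ (3 * n - 1 : ℕ))
    (h1 : derivative p - (n : Polynomial ℂ) * ((X ^ (3 * n - 1) - c) * p) =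
      (n : Polynomial ℂ) * (X ^ (n - 2) * q))
    (h2 : derivative q + (n : Polynomial ℂ) * ((X ^ (3 * n - 1) + c) * q) =
      (n : Polynomial ℂ) * (X ^ n * p)) :
    p = 0 ∧ q = 0 := by
  have hnP : (n : Polynomial ℂ) ≠ 0 := Nat.cast_ne_zero.mpr (by omega)
  have hn0 : (n : ℂ) ≠ 0 := Nat.cast_ne_zero.mpr (by omega)
  by_cases hp : p = 0
  · subst hp
    refine ⟨rfl, ?_⟩
    have h0 : (n : Polynomial ℂ) * (X ^ (n - 2) * q) = 0 := by simpa using h1.symm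
    rcases mul_eq_zero.mp h0 with h | h
    · exact absurd h hnP
    · rcases mul_eq_zero.mp h with h' | h'
      · exact absurd h' (pow_ne_zero _ X_ne_zero)
      · exact h'
  by_cases hq : q = 0
  · subst hq
    exfalso
    apply hp
    have h0 : (n : Polynomial ℂ) * (X ^ n * p) = 0 := by simpa using h2.symm
    rcases mul_eq_zero.mp h0 with h | h
    · exact absurd h hnP
    · rcases mul_eq_zero.mp h with h' | h'
      · exact absurd h' (pow_ne_zero _ X_ne_zero)
      · exact h'
  exfalso
  set a := p.natDegree with ha
  set b := q.natDegree with hb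
  have hα : p.coeff a ≠ 0 := fun h => hp (Polynomial.leadingCoeff_eq_zero.mp h)
  have hβ : q.coeff b ≠ 0 := fun h => hq (Polynomial.leadingCoeff_eq_zero.mp h)
  have hcle : c.natDegree ≤ 3 * n - 1 := Polynomial.natDegree_le_iff_degree_le.mpr hc
  -- coefficientwise forms of h1, h2
  have H1 : ∀ k : ℕ, p.coeff (k+1) * (k+1) - n * (((X ^ (3*n-1) - c) * p).coeff k)
      = n * ((X ^ (n-2) * q).coeff k) := by
    intro k
    have := congrArg (fun f => Polynomial.coeff f k) h1
    simpa [Polynomial.coeff_derivative] using this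
  have H2 : ∀ k : ℕ, q.coeff (k+1) * (k+1) + n * (((X ^ (3*n-1) + c) * q).coeff k)
      = n * ((X ^ n * p).coeff k) := by
    intro k
    have := congrArg (fun f => Polynomial.coeff f k) h2
    simpa [Polynomial.coeff_derivative] using this
  -- degree bounds
  have hsubdeg : ((X : ℂ[X]) ^ (3*n-1) - c).natDegree ≤ 3*n-1 := by
    refine (Polynomial.natDegree_sub_le _ _).trans ?_
    simp [Polynomial.natDegree_X_pow, hcle]
  have haddeg : ((X : ℂ[X]) ^ (3*n-1) + c).natDegree ≤ 3*n-1 := by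
    refine (Polynomial.natDegree_add_le _ _).trans ?_
    simp [Polynomial.natDegree_X_pow, hcle]
  -- Fact 1 : ¬ (a + (3n-1) < (n-2) + b)
  have F1 : ¬ (a + (3*n-1) < (n-2) + b) := by
    intro hlt
    have e1 : p.coeff ((n-2)+b+1) = 0 :=
      Polynomial.coeff_eq_zero_of_natDegree_lt (by omega)
    have e2 : (((X : ℂ[X]) ^ (3*n-1) - c) * p).coeff ((n-2)+b) = 0 := by
      apply Polynomial.coeff_eq_zero_of_natDegree_lt
      refine lt_of_le_of_lt (Polynomial.natDegree_mul_le.trans (add_le_add hsubdeg le_rfl)) ?_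
      omega
    have e3 : ((X : ℂ[X]) ^ (n-2) * q).coeff ((n-2)+b) = q.coeff b := by
      have := Polynomial.coeff_X_pow_mul q (n-2) b
      rwa [show b + (n-2) = (n-2)+b by omega] at this
    have := H1 ((n-2)+b)
    rw [e1, e2, e3] at this
    simp only [zero_mul, mul_zero, zero_sub, sub_zero] at this
    exact hβ ((mul_eq_zero.mp this.symm).resolve_left hn0)
  -- generic helpers
  have cxp : ∀ (m : ℕ) (f : Polynomial ℂ) (k j : ℕ), j + m = k →
      ((X : Polynomial ℂ)^m * f).coeff k = f.coeff j := by
    intro m f k j h; subst h; exact Polynomial.coeff_X_pow_mul f m j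
  have czero : ∀ (f : Polynomial ℂ) (m k : ℕ), f.natDegree ≤ m → m < k → f.coeff k = 0 :=
    fun f m k hm hk => Polynomial.coeff_eq_zero_of_natDegree_lt (lt_of_le_of_lt hm hk)
  have dXf : ∀ (m : ℕ) (f : Polynomial ℂ), ((X : Polynomial ℂ)^m * f).natDegree ≤ m + f.natDegree :=
    fun m f => Polynomial.natDegree_mul_le.trans (by simp [Polynomial.natDegree_X_pow])
  -- Fact 2 : ¬ (b + (3n-1) < n + a)
  have F2 : ¬ (b + (3*n-1) < n + a) := by
    intro hlt
    have e1 : q.coeff (n+a+1) = 0 := czero q b _ le_rfl (by omega)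
    have e2 : (((X : Polynomial ℂ) ^ (3*n-1) + c) * q).coeff (n+a) = 0 := by
      apply Polynomial.coeff_eq_zero_of_natDegree_lt
      exact lt_of_le_of_lt (Polynomial.natDegree_mul_le.trans (add_le_add haddeg le_rfl)) (by omega)
    have e3 : ((X : Polynomial ℂ) ^ n * p).coeff (n+a) = p.coeff a := cxp n p _ a (by omega)
    have := H2 (n+a)
    rw [e1, e2, e3] at this
    simp only [zero_mul, mul_zero, zero_add, add_zero] at this
    exact hα ((mul_eq_zero.mp this.symm).resolve_left hn0)
  -- F3 : top coefficient extraction from h1 at a + (3n-1)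
  have F3 : (n:ℂ) * ((c.coeff (3*n-1) - 1) * p.coeff a)
      = n * q.coeff (a + (3*n-1) - (n-2)) := by
    have e1 : p.coeff (a+(3*n-1)+1) = 0 := czero p a _ le_rfl (by omega)
    have e2 : (((X : Polynomial ℂ) ^ (3*n-1) - c) * p).coeff (a+(3*n-1))
        = p.coeff a - c.coeff (3*n-1) * p.coeff a := by
      rw [sub_mul, Polynomial.coeff_sub, cxp (3*n-1) p _ a rfl,
        show a+(3*n-1) = (3*n-1)+a from by omega,
        Polynomial.coeff_mul_add_eq_of_natDegree_le hcle le_rfl]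
    have e3 : ((X : Polynomial ℂ) ^ (n-2) * q).coeff (a+(3*n-1))
        = q.coeff (a + (3*n-1) - (n-2)) := cxp (n-2) q _ _ (by omega)
    have := H1 (a+(3*n-1))
    rw [e1, e2, e3] at this
    linear_combination this
  -- F4 : top coefficient extraction from h2 at b + (3n-1)
  have F4 : (n:ℂ) * ((c.coeff (3*n-1) + 1) * q.coeff b)
      = n * p.coeff (b + (3*n-1) - n) := by
    have e1 : q.coeff (b+(3*n-1)+1) = 0 := czero q b _ le_rfl (by omega)
    have e2 : (((X : Polynomial ℂ) ^ (3*n-1) + c) * q).coeff (b+(3*n-1))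
        = q.coeff b + c.coeff (3*n-1) * q.coeff b := by
      rw [add_mul, Polynomial.coeff_add, cxp (3*n-1) q _ b rfl,
        show b+(3*n-1) = (3*n-1)+b from by omega,
        Polynomial.coeff_mul_add_eq_of_natDegree_le hcle le_rfl]
    have e3 : ((X : Polynomial ℂ) ^ n * p).coeff (b+(3*n-1))
        = p.coeff (b + (3*n-1) - n) := cxp n p _ _ (by omega)
    have := H2 (b+(3*n-1))
    rw [e1, e2, e3] at this
    linear_combination this
  rcases lt_trichotomy ((n-2)+b) (a+(3*n-1)) with hT1 | hT1 | hT1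
  · -- (n-2)+b < a+(3n-1) : so c.coeff(3n-1) = 1
    have hq0 : q.coeff (a + (3*n-1) - (n-2)) = 0 := czero q b _ le_rfl (by omega)
    have hγ1 : c.coeff (3*n-1) = 1 := by
      rw [hq0, mul_zero] at F3
      rcases mul_eq_zero.mp F3 with h | h
      · exact absurd h hn0
      · rcases mul_eq_zero.mp h with h' | h'
        · linear_combination h'
        · exact absurd h' hα
    rcases lt_trichotomy (n+a) (b+(3*n-1)) with hT2 | hT2 | hT2
    · -- strict-strict : c.coeff(3n-1) = -1 as well, contradiction
      have hp0 : p.coeff (b + (3*n-1) - n) = 0 := czero p a _ le_rfl (by omega)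
      rw [hp0, mul_zero, hγ1] at F4
      rcases mul_eq_zero.mp F4 with h | h
      · exact absurd h hn0
      · rcases mul_eq_zero.mp h with h' | h'
        · norm_num at h'
        · exact absurd h' hβ
    · -- case II : n + a = b + (3n-1),  c is forced to be X^(3n-1)
      by_cases hct : c - X^(3*n-1) = 0
      · have hXc : (X : Polynomial ℂ)^(3*n-1) - c = 0 := by
          rw [← neg_sub c]; rw [hct]; ring
        rw [hXc] at h1
        simp only [zero_mul, mul_zero, sub_zero] at h1
        -- h1 : derivative p = n * (X^(n-2) * q)
        have K : ∀ j : ℕ, p.coeff ((n-2)+j+1) * (((n-2)+j : ℕ)+1) = n * q.coeff j := by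
          intro j
          have := congrArg (fun f => Polynomial.coeff f ((n-2)+j)) h1
          simpa [Polynomial.coeff_derivative, cxp (n-2) q ((n-2)+j) j (by omega)] using this
        have hKb := K b
        have hne : p.coeff ((n-2)+b+1) ≠ 0 := by
          intro h0
          rw [h0, zero_mul] at hKb
          exact hβ ((mul_eq_zero.mp hKb.symm).resolve_left hn0)
        have hle1 : (n-2)+b+1 ≤ a := Polynomial.le_natDegree_of_ne_zero hne
        have hKa := K (a-1-(n-2))
        rw [show (n-2)+(a-1-(n-2))+1 = a from by omega,
          show (n-2)+(a-1-(n-2)) = a-1 from by omega] at hKa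
        have hne2 : q.coeff (a-1-(n-2)) ≠ 0 := by
          intro h0
          rw [h0, mul_zero] at hKa
          rcases mul_eq_zero.mp hKa with h' | h'
          · exact hα h'
          · have hx : ((a-1:ℕ):ℂ) + 1 = (a:ℂ) := by
              rw [Nat.cast_sub (by omega : 1 ≤ a)]; ring
            rw [hx] at h'
            exact (Nat.cast_ne_zero.mpr (by omega : a ≠ 0)) h'
        have hle2 : a-1-(n-2) ≤ b := Polynomial.le_natDegree_of_ne_zero hne2
        have hn1 : n = 1 := by omega
        subst hn1
        -- now c = X^2, a = b+1
        have hc2 : c = X^2 := by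
          have := sub_eq_zero.mp hct
          simpa using this
        have hab : a = b+1 := by omega
        -- H2 at b+2 gives 2β = α
        have e1 : q.coeff (b+2+1) = 0 := czero q b _ le_rfl (by omega)
        have e2 : (((X : Polynomial ℂ) ^ (3*1-1) + c) * q).coeff (b+2)
            = 2 * q.coeff b := by
          rw [hc2]
          rw [show (3*1-1 : ℕ) = 2 from rfl]
          rw [show ((X:Polynomial ℂ)^2 + X^2) = (2:ℂ[X]) * X^2 from by ring]
          rw [mul_assoc, Polynomial.coeff_ofNat_mul, cxp 2 q (b+2) b (by omega)]
        have e3 : ((X : Polynomial ℂ) ^ 1 * p).coeff (b+2) = p.coeff a := by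
          rw [cxp 1 p (b+2) (b+1) (by omega), hab]
        have := H2 (b+2)
        rw [e1, e2, e3] at this
        simp only [zero_mul, zero_add, Nat.cast_one, one_mul] at this
        -- this : 2 * q.coeff b = p.coeff a
        -- K at b (n = 1): p.coeff (b+1) * (b+1) = q.coeff b
        have hKb1 := K b
        rw [show (1-2)+b+1 = b+1 from by omega] at hKb1
        rw [← hab] at hKb1
        simp only [Nat.cast_one, one_mul] at hKb1
        -- combine : α * (...) with factor 2b+1... derive contradiction
        apply hα
        have hcast : ((1:ℕ)-2+b : ℕ) = (b:ℕ) := by omega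
        rw [hcast] at hKb1
        -- hKb1 : p.coeff a * (b+1) = q.coeff b
        have : p.coeff a * (2*(b:ℂ)+1) = 0 := by
          linear_combination 2*hKb1 + this
        rcases mul_eq_zero.mp this with h' | h'
        · exact h'
        · exfalso
          have h2b : ((2*b+1 : ℕ) : ℂ) = 0 := by push_cast; linear_combination h'
          exact (Nat.cast_ne_zero.mpr (by omega : 2*b+1 ≠ 0)) h2b
      · -- c - X^(3n-1) ≠ 0 : degree contradiction in h1
        set d := (c - X^(3*n-1)).natDegree with hd
        have hlead : (c - X^(3*n-1)).coeff d ≠ 0 :=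
          fun h => hct (Polynomial.leadingCoeff_eq_zero.mp h)
        have e1 : p.coeff (a+d+1) = 0 := czero p a _ le_rfl (by omega)
        have e2 : (((X : Polynomial ℂ) ^ (3*n-1) - c) * p).coeff (a+d)
            = -((c - X^(3*n-1)).coeff d * p.coeff a) := by
          rw [show ((X : Polynomial ℂ) ^ (3*n-1) - c) = -((c - X^(3*n-1))) from by ring,
            neg_mul, Polynomial.coeff_neg, show a+d = d+a from by omega,
            Polynomial.natDegree_add_coeff_mul]
        have e3 : ((X : Polynomial ℂ) ^ (n-2) * q).coeff (a+d) = 0 := by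
          apply Polynomial.coeff_eq_zero_of_natDegree_lt
          exact lt_of_le_of_lt (dXf (n-2) q) (by omega)
        have := H1 (a+d)
        rw [e1, e2, e3] at this
        simp only [zero_mul, mul_zero, zero_sub, mul_neg, neg_neg] at this
        rcases mul_eq_zero.mp this with h' | h'
        · exact hn0 h'
        · rcases mul_eq_zero.mp h' with h'' | h''
          · exact hlead h''
          · exact hα h''
    · exact F2 hT2
  · -- case I : (n-2)+b = a+(3n-1),  c is forced to be -X^(3n-1)
    have hp0 : p.coeff (b + (3*n-1) - n) = 0 := czero p a _ le_rfl (by omega)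
    have hγm : c.coeff (3*n-1) = -1 := by
      rw [hp0, mul_zero] at F4
      rcases mul_eq_zero.mp F4 with h | h
      · exact absurd h hn0
      · rcases mul_eq_zero.mp h with h' | h'
        · linear_combination h'
        · exact absurd h' hβ
    by_cases hct : c + X^(3*n-1) = 0
    · have hXc : (X : Polynomial ℂ)^(3*n-1) + c = 0 := by rw [add_comm]; exact hct
      rw [hXc] at h2
      simp only [zero_mul, mul_zero, add_zero] at h2
      -- h2 : derivative q = n * (X^n * p)
      have K : ∀ j : ℕ, q.coeff (n+j+1) * ((n+j : ℕ)+1) = n * p.coeff j := by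
        intro j
        have := congrArg (fun f => Polynomial.coeff f (n+j)) h2
        simpa [Polynomial.coeff_derivative, cxp n p (n+j) j (by omega)] using this
      have hKa := K a
      have hne : q.coeff (n+a+1) ≠ 0 := by
        intro h0
        rw [h0, zero_mul] at hKa
        exact hα ((mul_eq_zero.mp hKa.symm).resolve_left hn0)
      have hle1 : n+a+1 ≤ b := Polynomial.le_natDegree_of_ne_zero hne
      have hKb := K (b-1-n)
      rw [show n+(b-1-n)+1 = b from by omega,
        show n+(b-1-n) = b-1 from by omega] at hKb
      have hne2 : p.coeff (b-1-n) ≠ 0 := by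
        intro h0
        rw [h0, mul_zero] at hKb
        rcases mul_eq_zero.mp hKb with h' | h'
        · exact hβ h'
        · have hx : ((b-1:ℕ):ℂ) + 1 = (b:ℂ) := by
            rw [Nat.cast_sub (by omega : 1 ≤ b)]; ring
          rw [hx] at h'
          exact (Nat.cast_ne_zero.mpr (by omega : b ≠ 0)) h'
      have hle2 : b-1-n ≤ a := Polynomial.le_natDegree_of_ne_zero hne2
      have hn1 : n = 1 := by omega
      subst hn1
      have hc2 : c = -X^2 := by
        have : c = -X^(3*1-1) := by linear_combination hct
        simpa using this
      have hab : b = a+2 := by omega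
      -- H1 at a+2 gives -2α = β
      have e1 : p.coeff (a+2+1) = 0 := czero p a _ le_rfl (by omega)
      have e2 : (((X : Polynomial ℂ) ^ (3*1-1) - c) * p).coeff (a+2)
          = 2 * p.coeff a := by
        rw [hc2]
        rw [show (3*1-1 : ℕ) = 2 from rfl]
        rw [show ((X:Polynomial ℂ)^2 - -X^2) = (2:ℂ[X]) * X^2 from by ring]
        rw [mul_assoc, Polynomial.coeff_ofNat_mul, cxp 2 p (a+2) a (by omega)]
      have e3 : ((X : Polynomial ℂ) ^ (1-2) * q).coeff (a+2) = q.coeff b := by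
        rw [show (1-2 : ℕ) = 0 from rfl, cxp 0 q (a+2) (a+2) (by omega), hab]
      have := H1 (a+2)
      rw [e1, e2, e3] at this
      simp only [zero_mul, zero_sub, Nat.cast_one, one_mul] at this
      -- this : -(2 * p.coeff a) = q.coeff b
      -- K at a (n = 1) : q.coeff (a+2) * (a+2) = p.coeff a
      have hKa1 := K a
      rw [show (1+a+1 : ℕ) = a+2 from by omega, ← hab] at hKa1
      simp only [Nat.cast_one, one_mul] at hKa1
      apply hβ
      have hcast : ((1+a : ℕ) : ℂ) = (a:ℂ)+1 := by push_cast; ring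
      rw [hcast] at hKa1
      -- hKa1 : q.coeff b * ((a+1)+1) = p.coeff a
      have : q.coeff b * (2*(a:ℂ)+5) = 0 := by
        linear_combination 2*hKa1 - this
      rcases mul_eq_zero.mp this with h' | h'
      · exact h'
      · exfalso
        have h2a : ((2*a+5 : ℕ) : ℂ) = 0 := by push_cast; linear_combination h'
        exact (Nat.cast_ne_zero.mpr (by omega : 2*a+5 ≠ 0)) h2a
    · -- c + X^(3n-1) ≠ 0 : degree contradiction in h2
      set d := (c + X^(3*n-1)).natDegree with hd
      have hlead : (c + X^(3*n-1)).coeff d ≠ 0 :=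
        fun h => hct (Polynomial.leadingCoeff_eq_zero.mp h)
      have e1 : q.coeff (b+d+1) = 0 := czero q b _ le_rfl (by omega)
      have e2 : (((X : Polynomial ℂ) ^ (3*n-1) + c) * q).coeff (b+d)
          = (c + X^(3*n-1)).coeff d * q.coeff b := by
        rw [show ((X : Polynomial ℂ) ^ (3*n-1) + c) = c + X^(3*n-1) from by ring,
          show b+d = d+b from by omega, Polynomial.natDegree_add_coeff_mul]
      have e3 : ((X : Polynomial ℂ) ^ n * p).coeff (b+d) = 0 := by
        apply Polynomial.coeff_eq_zero_of_natDegree_lt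
        exact lt_of_le_of_lt (dXf n p) (by omega)
      have := H2 (b+d)
      rw [e1, e2, e3] at this
      simp only [zero_mul, mul_zero, zero_add] at this
      rcases mul_eq_zero.mp this with h' | h'
      · exact hn0 h'
      · rcases mul_eq_zero.mp h' with h'' | h''
        · exact hlead h''
        · exact hβ h''
  · exact F1 hT1
end
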